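/- In a single-decision CID graph, removing all nonrequisite information links (information links from observations that fail the observation incentive criterion) yields a reduced graph in which, for any parameterization, the optimal value equals the optimal value in the original graph. -/

import Mathlib

/-- A directed acyclic graph on node set `V`. -/
structure DAG (V : Type) where
  E : V → V → Prop
  acyclic : ∀ v, ¬ Relation.TransGen E v v

namespace DAG

variable {V : Type}

/-- A three-node segment `a — b — c` of an undirected path is active given `Z`:
colliders are active iff some descendant of the middle node (including itself) is in `Z`,
chains and forks are active iff the middle node is not in `Z`. -/
def ActiveTriple (G : DAG V) (Z : Set V) (a b c : V) : Prop :=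
  (G.E a b ∧ G.E c b ∧ ∃ w, Relation.ReflTransGen G.E b w ∧ w ∈ Z) ∨
  (¬ (G.E a b ∧ G.E c b) ∧ b ∉ Z)

/-- An undirected path: consecutive nodes are joined by an edge in either direction. -/
def IsUPath (G : DAG V) : List V → Prop
  | [] => False
  | [_] => True
  | x :: y :: rest => (G.E x y ∨ G.E y x) ∧ IsUPath G (y :: rest)

/-- A path is active given `Z` if every three-node segment is active. -/
def ActivePath (G : DAG V) (Z : Set V) : List V → Prop
  | x :: y :: z :: rest => ActiveTriple G Z x y z ∧ ActivePath G Z (y :: z :: rest)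
  | _ => True

/-- `x` and `y` are d-connected given `Z` if some undirected path between them is active. -/
def DConn (G : DAG V) (Z : Set V) (x y : V) : Prop :=
  ∃ p : List V, p.Nodup ∧ G.IsUPath p ∧ p.head? = some x ∧ p.getLast? = some y ∧
    G.ActivePath Z p

end DAG

/-- A single-decision causal influence diagram graph: a DAG with a decision node `dec`
and a set of utility nodes `util`. -/
structure CID (V : Type) extends DAG V where
  dec : V
  util : Finset V
  dec_not_util : dec ∉ util

/-- A directed path (allowing length 0) from `x` to `u` that avoids the node `d`. -/
def DirPathAvoiding {V : Type} (E : V → V → Prop) (x u d : V) : Prop :=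
  ∃ p : List V, p ≠ [] ∧ p.head? = some x ∧ p.getLast? = some u ∧
    List.Chain' E p ∧ d ∉ p

namespace CID

variable {V : Type}

/-- The decision context: the parents (observations) of the decision node. -/
def Pa (C : CID V) : Set V := {u | C.E u C.dec}

/-- An observation `O ∈ Pa_D` is requisite if it is d-connected to a utility node
descending from the decision, conditioning on `{D} ∪ Pa_D \ {O}`. -/
def Requisite (C : CID V) (O : V) : Prop :=
  O ∈ C.Pa ∧ ∃ u ∈ C.util, Relation.ReflTransGen C.E C.dec u ∧
    C.toDAG.DConn ({C.dec} ∪ (C.Pa \ {O})) O u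

/-- A nonrequisite observation. -/
def Nonrequisite (C : CID V) (O : V) : Prop :=
  O ∈ C.Pa ∧ ¬ C.Requisite O

/-- The edge relation of the reduced graph `G*`: all nonrequisite information links
(edges into the decision from nonrequisite observations) are removed. -/
def Ered (C : CID V) : V → V → Prop :=
  fun u v => C.E u v ∧ (v = C.dec → C.Requisite u)

/-- A parameterization of a CID graph: finite domains for every node, conditional
probability distributions for every non-decision node, and a real-valued interpretation
of the outcomes of the (utility) nodes. -/
structure Param [Fintype V] [DecidableEq V] (C : CID V) (val : V → Type)
    [∀ v, Fintype (val v)] where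
  cpt : ∀ _v : V, (∀ u : V, val u) → ℝ
  cpt_nonneg : ∀ v a, 0 ≤ cpt v a
  cpt_local : ∀ v, v ≠ C.dec → ∀ a b, a v = b v → (∀ u, C.E u v → a u = b u) →
    cpt v a = cpt v b
  cpt_sum : ∀ v, v ≠ C.dec → ∀ a : ∀ u : V, val u,
    ∑ x : val v, cpt v (Function.update a v x) = 1
  uval : ∀ v : V, val v → ℝ

/-- A policy whose decision may depend (only) on the observations in `Obs`:
a conditional distribution for the decision given the values of the nodes in `Obs`. -/
structure Pol [Fintype V] [DecidableEq V] (C : CID V) (val : V → Type)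
    [∀ v, Fintype (val v)] (Obs : Set V) where
  p : (∀ v : V, val v) → ℝ
  nonneg : ∀ a, 0 ≤ p a
  depends : ∀ a b, a C.dec = b C.dec → (∀ u ∈ Obs, a u = b u) → p a = p b
  sum : ∀ a : ∀ v : V, val v, ∑ d : val C.dec, p (Function.update a C.dec d) = 1

/-- The value (expected sum of utilities) of a decision rule `p` under a
parameterization `P`. -/
noncomputable def value [Fintype V] [DecidableEq V] (C : CID V) {val : V → Type}
    [∀ v, Fintype (val v)] (P : C.Param val) (p : (∀ v : V, val v) → ℝ) : ℝ :=
  ∑ a : ∀ v : V, val v,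
    (p a * ∏ v ∈ Finset.univ.erase C.dec, P.cpt v a) * ∑ u ∈ C.util, P.uval u (a u)

end CID

/-!
Write `D` for the decision, `R` and `N` for the requisite and nonrequisite observations, and
`Z = {D} ∪ R`. Policies on `R` are policies on `Pa_D`, so only `≥` needs proof.

Let `reach` be the set of nodes outside `Z` that are d-connected given `Z` to a node of `N`.
It contains no utility descending from `D`: on a connecting path, the suffix from the last
nonrequisite observation `O` is active given `{D} ∪ Pa_D \ {O}`, which would make `O` requisite.

Fix the values of `D` and `Pa_D`. Nodes that are not ancestors of `D` or of a relevant utility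
sum out. Of the remaining conditional distributions, those whose family meets `reach` read only
observations and nodes of `reach`, never `D`; the others, and the relevant utilities, read only
`Z` and nodes outside `reach`. So the conditional expected utility is `W * Q + I`, with `W ≥ 0`
and `I` (the irrelevant utilities) independent of `D`, and `Q` a function of `D` and `R` alone.
Maximizing `Q` over `D` gives a policy on `R` at least as good as any policy on `Pa_D`.
-/

open Relation

lemma List.exists_eq_append_cons_forall_not_of_exists {α : Type*} (P : α → Prop) :
    ∀ {l : List α}, (∃ x ∈ l, P x) → ∃ l₁ x l₂, l = l₁ ++ x :: l₂ ∧ P x ∧ ∀ y ∈ l₂, ¬ P y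
  | a :: t, h => by
    by_cases ht : ∃ x ∈ t, P x
    · obtain ⟨l₁, x, l₂, rfl, hx, hl₂⟩ := List.exists_eq_append_cons_forall_not_of_exists P ht
      exact ⟨a :: l₁, x, l₂, rfl, hx, hl₂⟩
    · push Not at ht
      obtain ⟨x, hx, hPx⟩ := h
      rcases List.mem_cons.mp hx with rfl | hxt
      · exact ⟨[], x, t, rfl, hPx, ht⟩
      · exact absurd hPx (ht x hxt)

lemma Relation.ReflTransGen.restrict_or_exists_mem {α : Type*} {r : α → α → Prop} {S : Set α}
    {a b : α} (h : ReflTransGen r a b) :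
    ReflTransGen (fun x y => r x y ∧ y ∉ S) a b ∨ ∃ c ∈ S, ReflTransGen r a c := by
  induction h using ReflTransGen.head_induction_on with
  | refl => exact .inl .refl
  | @head a c e _ ih =>
    by_cases hc : c ∈ S
    · exact .inr ⟨c, hc, .single e⟩
    · rcases ih with h | ⟨d, hd, hcd⟩
      · exact .inl (.head ⟨e, hc⟩ h)
      · exact .inr ⟨d, hd, .head e hcd⟩

section DependsOn

variable {ι : Type*} {α : ι → Type*} {β : Type*} {s : Set ι}

lemma DependsOn.mul [Mul β] {f g : (Π i, α i) → β} (hf : DependsOn f s) (hg : DependsOn g s) :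
    DependsOn (fun x => f x * g x) s :=
  fun _ _ h => congrArg₂ (· * ·) (hf h) (hg h)

lemma dependsOn_finset_prod [CommMonoid β] {κ : Type*} {t : Finset κ}
    {f : κ → (Π i, α i) → β} (hf : ∀ k ∈ t, DependsOn (f k) s) :
    DependsOn (fun x => ∏ k ∈ t, f k x) s :=
  fun _ _ h => Finset.prod_congr rfl fun k hk => hf k hk h

lemma dependsOn_finset_sum [AddCommMonoid β] {κ : Type*} {t : Finset κ}
    {f : κ → (Π i, α i) → β} (hf : ∀ k ∈ t, DependsOn (f k) s) :
    DependsOn (fun x => ∑ k ∈ t, f k x) s :=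
  fun _ _ h => Finset.sum_congr rfl fun k hk => hf k hk h

variable {f : (Π i, α i) → β} (K : Set ι) [DecidablePred (· ∈ K)]

lemma DependsOn.piecewise_left (hf : DependsOn f s) (g : Π i, α i) :
    DependsOn (fun x => f (K.piecewise x g)) (s ∩ K) := fun x y h => hf fun i hi => by
  by_cases hiK : i ∈ K
  · simp [hiK, h i ⟨hi, hiK⟩]
  · simp [hiK]

lemma DependsOn.piecewise_right (hf : DependsOn f s) (x : Π i, α i) :
    DependsOn (fun g => f (K.piecewise x g)) (s \ K) := fun g g' h => hf fun i hi => by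
  by_cases hiK : i ∈ K
  · simp [hiK]
  · simp [hiK, h i ⟨hi, hiK⟩]

end DependsOn

section Assignments

variable {ι : Type*} {α : ι → Type*} [∀ i, Fintype (α i)]

lemma prod_card_ne_zero (x : Π i, α i) (s : Finset ι) :
    (∏ i ∈ s, (Fintype.card (α i) : ℝ)) ≠ 0 :=
  Finset.prod_ne_zero_iff.mpr fun i _ => Nat.cast_ne_zero.mpr (@Fintype.card_ne_zero _ _ ⟨x i⟩)

variable [DecidableEq ι]

-- `x i` only witnesses that `α i` is nonempty.
noncomputable def argmaxUpdate (i : ι) (F : (Π i, α i) → ℝ) (x : Π i, α i) : α i :=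
  haveI : Nonempty (α i) := ⟨x i⟩
  (Finite.exists_max fun y => F (Function.update x i y)).choose

lemma le_argmaxUpdate (i : ι) (F : (Π i, α i) → ℝ) (x : Π i, α i) (y : α i) :
    F (Function.update x i y) ≤ F (Function.update x i (argmaxUpdate i F x)) :=
  haveI : Nonempty (α i) := ⟨x i⟩
  (Finite.exists_max fun y => F (Function.update x i y)).choose_spec y

lemma argmaxUpdate_congr {i : ι} {F : (Π i, α i) → ℝ} {x y : Π i, α i}
    (h : ∀ z, F (Function.update x i z) = F (Function.update y i z)) :
    argmaxUpdate i F x = argmaxUpdate i F y := by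
  unfold argmaxUpdate
  simp_rw [h]

lemma argmaxUpdate_update (i : ι) (F : (Π i, α i) → ℝ) (x : Π i, α i) (y : α i) :
    argmaxUpdate i F (Function.update x i y) = argmaxUpdate i F x :=
  argmaxUpdate_congr fun z => by rw [Function.update_idem]

variable [Fintype ι] {R : Type*} [CommSemiring R]

lemma card_pi_ne_zero (x : Π i, α i) : (Fintype.card (Π i, α i) : ℝ) ≠ 0 :=
  Nat.cast_ne_zero.mpr (@Fintype.card_ne_zero _ _ ⟨x⟩)

lemma sum_sum_piecewise (K : Set ι) [DecidablePred (· ∈ K)] (F : (Π i, α i) → R) :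
    ∑ x, ∑ y, F (K.piecewise x y) = Fintype.card (Π i, α i) * ∑ x, F x := by
  have he : Function.Involutive fun p : (Π i, α i) × (Π i, α i) =>
      (K.piecewise p.1 p.2, K.piecewise p.2 p.1) := by
    rintro ⟨x, y⟩
    ext i <;> by_cases hi : i ∈ K <;> simp [hi]
  rw [← Fintype.sum_prod_type']
  refine (Equiv.sum_comp he.toPerm (fun p => F p.1)).trans ?_
  simp only [Fintype.sum_prod_type, Finset.sum_const, Finset.card_univ, nsmul_eq_mul,
    ← Finset.mul_sum]

lemma sum_sum_update (i : ι) (F : (Π i, α i) → R) :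
    ∑ x, ∑ y : α i, F (Function.update x i y) = Fintype.card (α i) * ∑ x, F x := by
  have he : Function.Involutive fun p : (Π i, α i) × α i => (Function.update p.1 i p.2, p.1 i) := by
    rintro ⟨x, y⟩
    simp
  rw [← Fintype.sum_prod_type']
  refine (Equiv.sum_comp he.toPerm (fun p => F p.1)).trans ?_
  simp only [Fintype.sum_prod_type, Finset.sum_const, Finset.card_univ, nsmul_eq_mul,
    ← Finset.mul_sum]

lemma sum_mul_sum_of_dependsOn {K : Set ι} {f g : (Π i, α i) → R} (hf : DependsOn f K)
    (hg : DependsOn g Kᶜ) :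
    (∑ x, f x) * ∑ x, g x = Fintype.card (Π i, α i) * ∑ x, f x * g x := by
  classical
  rw [← sum_sum_piecewise K (fun x => f x * g x), Finset.sum_mul_sum]
  refine Finset.sum_congr rfl fun x _ => Finset.sum_congr rfl fun y _ => ?_
  rw [hf fun i hi => (Set.piecewise_eq_of_mem _ _ _ hi).symm,
    hg fun i hi => (Set.piecewise_eq_of_notMem _ _ _ hi).symm]

end Assignments

namespace DAG

variable {V : Type} (G : DAG V)

lemma irrefl (v : V) : ¬ G.E v v := fun h => G.acyclic v (.single h)

lemma asymm {v w : V} (h : G.E v w) : ¬ G.E w v := fun h' => G.acyclic v (.tail (.single h) h')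

lemma not_edge_of_reflTransGen {v w : V} (h : ReflTransGen G.E v w) : ¬ G.E w v :=
  fun h' => G.acyclic v (.tail' h h')

lemma exists_sink [Finite V] {S : Set V} (hS : S.Nonempty) : ∃ v ∈ S, ∀ w ∈ S, ¬ G.E v w := by
  have : IsTrans V fun a b => TransGen G.E b a := ⟨fun _ _ _ hab hbc => hbc.trans hab⟩
  have : Std.Irrefl fun a b => TransGen G.E b a := ⟨G.acyclic⟩
  obtain ⟨v, hv, hmin⟩ :=
    (Finite.wellFounded_of_trans_of_irrefl fun a b => TransGen G.E b a).has_min S hS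
  exact ⟨v, hv, fun w hw e => hmin w hw (.single e)⟩

/-- The variables read by the conditional distribution of `v`. -/
def family (v : V) : Set V := insert v {u | G.E u v}

def ancestors (X : Set V) : Set V := {v | ∃ t ∈ X, ReflTransGen G.E v t}

variable {G} {X Z Z' : Set V} {p q : List V} {x y z v w : V}

lemma reflTransGen_of_mem_family (h : w ∈ G.family v) : ReflTransGen G.E w v := by
  rcases h with rfl | h
  exacts [.refl, .single h]

lemma subset_ancestors : X ⊆ G.ancestors X := fun v hv => ⟨v, hv, .refl⟩

lemma mem_ancestors_of_edge (e : G.E v w) (hw : w ∈ G.ancestors X) : v ∈ G.ancestors X := by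
  obtain ⟨t, ht, hwt⟩ := hw
  exact ⟨t, ht, .head e hwt⟩


lemma isUPath_iff : ∀ {p : List V}, G.IsUPath p ↔ p ≠ [] ∧ p.IsChain (fun x y => G.E x y ∨ G.E y x)
  | [] => by simp [IsUPath]
  | [x] => by simp [IsUPath]
  | x :: y :: rest => by
      rw [IsUPath, isUPath_iff, List.isChain_cons_cons]
      simp

lemma IsUPath.of_append_left (h : G.IsUPath (p ++ q)) (hp : p ≠ []) : G.IsUPath p := by
  rw [isUPath_iff] at h ⊢
  exact ⟨hp, (List.isChain_append.mp h.2).1⟩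

lemma IsUPath.of_append_right (h : G.IsUPath (p ++ q)) (hq : q ≠ []) : G.IsUPath q := by
  rw [isUPath_iff] at h ⊢
  exact ⟨hq, (List.isChain_append.mp h.2).2.1⟩

lemma IsUPath.concat (h : G.IsUPath p) (hl : p.getLast? = some w) (e : G.E w v ∨ G.E v w) :
    G.IsUPath (p ++ [v]) := by
  rw [isUPath_iff] at h ⊢
  refine ⟨by simp, List.isChain_append.mpr ⟨h.2, List.isChain_singleton v, ?_⟩⟩
  simp_all

lemma ActiveTriple.mono (h : G.ActiveTriple Z x y z) (hZ : Z ⊆ Z') (hy : y ∈ Z' → y ∈ Z) :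
    G.ActiveTriple Z' x y z := by
  rcases h with ⟨hx, hz, w, hyw, hw⟩ | ⟨hc, hyZ⟩
  · exact .inl ⟨hx, hz, w, hyw, hZ hw⟩
  · exact .inr ⟨hc, fun h => hyZ (hy h)⟩

lemma activeTriple_of_not_mem (hy : y ∉ Z)
    (h : G.E x y → G.E z y → ∃ w, ReflTransGen G.E y w ∧ w ∈ Z) : G.ActiveTriple Z x y z := by
  by_cases hc : G.E x y ∧ G.E z y
  · exact .inl ⟨hc.1, hc.2, h hc.1 hc.2⟩
  · exact .inr ⟨hc, hy⟩

lemma ActivePath.tail : ∀ {p : List V}, G.ActivePath Z p → G.ActivePath Z p.tail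
  | [], _ | [_], _ | [_, _], _ => trivial
  | _ :: _ :: _ :: _, h => h.2

lemma ActivePath.of_append_right : ∀ {p : List V}, G.ActivePath Z (p ++ q) → G.ActivePath Z q
  | [], h => h
  | _ :: _, h => ActivePath.of_append_right (ActivePath.tail h)

lemma ActivePath.of_append_left : ∀ {p : List V}, G.ActivePath Z (p ++ q) → G.ActivePath Z p
  | [], _ | [_], _ | [_, _], _ => trivial
  | _ :: _ :: _ :: _, h => ⟨h.1, ActivePath.of_append_left (p := _ :: _ :: _) h.2⟩

lemma ActivePath.triple {l₁ l₂ : List V} (h : G.ActivePath Z (l₁ ++ x :: y :: z :: l₂)) :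
    G.ActiveTriple Z x y z :=
  h.of_append_right.1

lemma ActivePath.concat : ∀ {p : List V} {w : V}, G.ActivePath Z p → p.getLast? = some w →
    (∀ x, p.dropLast.getLast? = some x → G.ActiveTriple Z x w v) → G.ActivePath Z (p ++ [v])
  | [], _, _, _, _ | [_], _, _, _, _ => trivial
  | [x, y], w, _, hl, htr => by
      obtain rfl : y = w := by simpa using hl
      exact ⟨htr x rfl, trivial⟩
  | x :: y :: z :: p, _, h, hl, htr => by
      refine ⟨h.1, ActivePath.concat h.2 (by simpa using hl) fun x hx => htr x ?_⟩
      cases p <;> simp_all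

lemma ActivePath.mono (hZ : Z ⊆ Z') : ∀ {p : List V}, G.ActivePath Z p →
    (∀ y ∈ p.tail, y ∈ Z' → y ∈ Z) → G.ActivePath Z' p
  | [], _, _ | [_], _, _ | [_, _], _, _ => trivial
  | _ :: _ :: _ :: _, h, hy =>
      ⟨h.1.mono hZ (hy _ (by simp)), h.2.mono hZ fun y hy' => hy y (List.mem_cons_of_mem _ hy')⟩

end DAG

namespace CID

variable {V : Type} (C : CID V)

/-- The family of the decision in the reduced graph. -/
def requisiteFamily : Set V := insert C.dec {O | C.Requisite O}

def IsTrail (p : List V) (w : V) : Prop :=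
  p.Nodup ∧ C.IsUPath p ∧ (∃ O, C.Nonrequisite O ∧ p.head? = some O) ∧ p.getLast? = some w ∧
    C.ActivePath C.requisiteFamily p

def reach : Set V := {w | w ∉ C.requisiteFamily ∧ ∃ p, C.IsTrail p w}

def relevantAncestors : Set V :=
  C.ancestors (C.family C.dec ∪ {u | u ∈ C.util ∧ ReflTransGen C.E C.dec u})

def irrelevantAncestors : Set V :=
  C.ancestors (C.family C.dec ∪ {u | u ∈ C.util ∧ ¬ ReflTransGen C.E C.dec u})

variable {C} {p : List V} {O u v w x : V}

lemma requisiteFamily_subset_family : C.requisiteFamily ⊆ C.family C.dec := by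
  rintro z (rfl | hz)
  · exact Set.mem_insert _ _
  · exact Set.mem_insert_of_mem _ hz.1

lemma Nonrequisite.not_mem_requisiteFamily (hO : C.Nonrequisite O) :
    O ∉ C.requisiteFamily := by
  rintro (h | h)
  · exact C.irrefl _ (h ▸ hO.1)
  · exact hO.2 h

lemma IsTrail.prefix {l₁ l₂ : List V} (h : C.IsTrail (l₁ ++ v :: l₂) w) :
    C.IsTrail (l₁ ++ [v]) v := by
  obtain ⟨hnd, hu, ⟨O, hO, hh⟩, -, ha⟩ := h
  rw [List.append_cons] at hnd hu ha hh
  refine ⟨hnd.sublist (List.sublist_append_left _ _), hu.of_append_left (by simp),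
    ⟨O, hO, ?_⟩, by simp, ha.of_append_left⟩
  rwa [List.head?_append_of_ne_nil _ (by simp)] at hh

lemma IsTrail.concat (h : C.IsTrail p w) (hv : v ∉ p) (e : C.E w v ∨ C.E v w)
    (htr : ∀ x, p.dropLast.getLast? = some x → C.ActiveTriple C.requisiteFamily x w v) :
    C.IsTrail (p ++ [v]) v := by
  obtain ⟨hnd, hu, ⟨O, hO, hh⟩, hl, ha⟩ := h
  have hp : p ≠ [] := (DAG.isUPath_iff.mp hu).1
  refine ⟨hnd.append (List.nodup_singleton v) (by simpa using hv), hu.concat hl e,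
    ⟨O, hO, by rwa [List.head?_append_of_ne_nil _ hp]⟩, by simp, ha.concat hl htr⟩

lemma IsTrail.mem_reach (h : C.IsTrail p w) (hv : v ∈ p) (hvZ : v ∉ C.requisiteFamily) :
    v ∈ C.reach := by
  obtain ⟨l₁, l₂, rfl⟩ := List.append_of_mem hv
  exact ⟨hvZ, _, h.prefix⟩

lemma IsTrail.concat_mem_reach (h : C.IsTrail p w) (hv : v ∉ C.requisiteFamily)
    (e : C.E w v ∨ C.E v w)
    (htr : ∀ x, p.dropLast.getLast? = some x → C.ActiveTriple C.requisiteFamily x w v) :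
    v ∈ C.reach := by
  by_cases hvp : v ∈ p
  · exact h.mem_reach hvp hv
  · exact ⟨hv, _, h.concat hvp e htr⟩

lemma Nonrequisite.mem_reach (hO : C.Nonrequisite O) : O ∈ C.reach :=
  ⟨hO.not_mem_requisiteFamily, [O], by simp, trivial, ⟨O, hO, rfl⟩, rfl, trivial⟩

lemma mem_reach_of_parent (hw : w ∈ C.reach) (e : C.E w v) (hv : v ∉ C.requisiteFamily) :
    v ∈ C.reach := by
  obtain ⟨hwZ, p, hp⟩ := hw
  exact hp.concat_mem_reach hv (.inl e) fun x _ =>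
    DAG.activeTriple_of_not_mem hwZ fun _ h => (C.asymm e h).elim

lemma mem_reach_of_reflTransGen (hw : w ∈ C.reach)
    (h : ReflTransGen (fun x y => C.E x y ∧ y ∉ C.requisiteFamily) w v) : v ∈ C.reach := by
  induction h with
  | refl => exact hw
  | tail _ e ih => exact mem_reach_of_parent ih e.1 e.2

/-- The path reaches `v` through `w`, as a non-collider or as an active collider. -/
lemma mem_reach_of_child (hw : w ∈ C.reach) (e : C.E v w)
    (hv : v ∉ C.requisiteFamily) (hz : ∃ z ∈ C.requisiteFamily, ReflTransGen C.E w z) :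
    v ∈ C.reach := by
  obtain ⟨hwZ, p, hp⟩ := hw
  obtain ⟨z, hz, hwz⟩ := hz
  exact hp.concat_mem_reach hv (.inr e) fun x _ =>
    DAG.activeTriple_of_not_mem hwZ fun _ _ => ⟨z, hwz, hz⟩

/-- If `c` already lies on the trail, it is an interior node in `Z`, hence a collider. -/
lemma exists_trail_ending_with_edge {q c : V} (hq : q ∈ C.reach) (e : C.E q c)
    (hc : c ∈ C.requisiteFamily) : ∃ l x, C.IsTrail (l ++ [x, c]) c ∧ C.E x c := by
  obtain ⟨hqZ, p, hp⟩ := hq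
  by_cases hcp : c ∈ p
  · obtain ⟨l₁, l₂, rfl⟩ := List.append_of_mem hcp
    obtain ⟨y, l₂, rfl⟩ : ∃ y l, l₂ = y :: l := by
      refine List.exists_cons_of_ne_nil fun h => hqZ ?_
      obtain rfl : c = q := by simpa [h] using hp.2.2.2.1
      exact hc
    obtain ⟨l₁, x, rfl⟩ : ∃ l x, l₁ = l ++ [x] := by
      refine (List.eq_nil_or_concat' l₁).resolve_left fun h => ?_
      obtain ⟨O, hO, hh⟩ := hp.2.2.1
      obtain rfl : c = O := by simpa [h] using hh
      exact hO.not_mem_requisiteFamily hc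
    have hxc : C.E x c := by
      rcases (show C.ActivePath _ (l₁ ++ x :: c :: y :: l₂) by simpa using hp.2.2.2.2).triple
        with ⟨hxc, -⟩ | ⟨-, hcZ⟩
      · exact hxc
      · exact absurd hc hcZ
    exact ⟨l₁, x, by simpa using hp.prefix, hxc⟩
  · obtain ⟨l, rfl⟩ : ∃ l, p = l ++ [q] := by
      rcases List.eq_nil_or_concat' p with rfl | ⟨l, b, rfl⟩
      · exact hp.2.1.elim
      · obtain rfl : b = q := by simpa using hp.2.2.2.1
        exact ⟨l, rfl⟩
    refine ⟨l, q, by simpa using hp.concat hcp (.inl e) fun x _ =>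
      DAG.activeTriple_of_not_mem hqZ fun _ h => (C.asymm e h).elim, e⟩

lemma mem_reach_of_coparent {q c : V} (hq : q ∈ C.reach) (e : C.E q c) (e' : C.E v c)
    (hc : c ∈ C.requisiteFamily) (hv : v ∉ C.requisiteFamily) : v ∈ C.reach := by
  obtain ⟨l, x, hp, hxc⟩ := exists_trail_ending_with_edge hq e hc
  exact hp.concat_mem_reach hv (.inr e') fun y hy =>
    .inl ⟨by simp_all, e', c, .refl, hc⟩

/-- The suffix of a trail from its last nonrequisite observation `O'` is active given
`{D} ∪ Pa \ {O'}`, so a trail to a relevant utility would make `O'` requisite. -/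
lemma not_mem_reach_of_utility (hu : u ∈ C.util) (hDu : ReflTransGen C.E C.dec u) :
    u ∉ C.reach := by
  rintro ⟨-, p, hnd, hup, ⟨O, hO, hh⟩, hl, ha⟩
  obtain ⟨l₁, O', l₂, rfl, hO', hl₂⟩ := List.exists_eq_append_cons_forall_not_of_exists
    C.Nonrequisite ⟨O, List.mem_of_mem_head? hh, hO⟩
  refine hO'.2 ⟨hO'.1, u, hu, hDu, O' :: l₂, hnd.sublist (List.sublist_append_right _ _),
    hup.of_append_right (by simp), rfl, ?_, ha.of_append_right.mono ?_ ?_⟩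
  · rwa [List.getLast?_append_of_ne_nil _ (by simp)] at hl
  · rintro z (rfl | hz)
    · exact .inl rfl
    · exact .inr ⟨hz.1, fun h => hO'.2 ((Set.mem_singleton_iff.mp h) ▸ hz)⟩
  · rintro y hy (rfl | ⟨hyPa, -⟩)
    · exact .inl rfl
    · exact .inr (by_contra fun h => hl₂ y hy ⟨hyPa, h⟩)

lemma mem_requisiteFamily_of_not_mem_reach (hv : v ∈ C.family C.dec) (hvR : v ∉ C.reach) :
    v ∈ C.requisiteFamily := by
  rcases hv with rfl | hv
  · exact Set.mem_insert _ _
  · exact Set.mem_insert_of_mem _ (by_contra fun h => hvR (Nonrequisite.mem_reach ⟨hv, h⟩))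

lemma exists_mem_requisiteFamily_of_mem_reach (hv : v ∈ C.reach)
    (hvT : v ∈ C.relevantAncestors) : ∃ z ∈ C.requisiteFamily, ReflTransGen C.E v z := by
  obtain ⟨t, ht | ⟨hu, hDu⟩, hvt⟩ := hvT
  · exact ⟨C.dec, Set.mem_insert _ _, hvt.trans (DAG.reflTransGen_of_mem_family ht)⟩
  · refine hvt.restrict_or_exists_mem.resolve_left fun h => ?_
    exact not_mem_reach_of_utility hu hDu (mem_reach_of_reflTransGen hv h)

lemma not_edge_dec_of_mem_reach (hv : v ∈ C.reach) (hvT : v ∈ C.relevantAncestors) :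
    ¬ C.E C.dec v := fun e => by
  obtain ⟨z, hz, hvz⟩ := exists_mem_requisiteFamily_of_mem_reach hv hvT
  exact C.acyclic _ (.head' e (hvz.trans
    (DAG.reflTransGen_of_mem_family (requisiteFamily_subset_family hz))))

lemma family_subset_of_mem_reach (hvT : v ∈ C.relevantAncestors) (hvD : v ≠ C.dec)
    (hv : (C.family v ∩ C.reach).Nonempty) :
    C.family v \ C.family C.dec ⊆ C.reach ∧ C.dec ∉ C.family v := by
  have key : v ∈ C.reach ∨ v ∈ C.requisiteFamily ∧ ∃ q ∈ C.reach, C.E q v := by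
    obtain ⟨y, rfl | hyv, hy⟩ := hv
    · exact .inl hy
    · by_cases hvZ : v ∈ C.requisiteFamily
      · exact .inr ⟨hvZ, y, hy, hyv⟩
      · exact .inl (mem_reach_of_parent hy hyv hvZ)
  constructor
  · rintro x ⟨rfl | hxv, hxF⟩
    · exact key.resolve_right fun h => hxF (requisiteFamily_subset_family h.1)
    · have hxZ : x ∉ C.requisiteFamily := fun h => hxF (requisiteFamily_subset_family h)
      rcases key with hvR | ⟨hvZ, q, hq, hqv⟩
      · exact mem_reach_of_child hvR hxv hxZ
          (exists_mem_requisiteFamily_of_mem_reach hvR hvT)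
      · exact mem_reach_of_coparent hq hqv hxv hvZ hxZ
  · rintro (h | e)
    · exact hvD h.symm
    rcases key with hvR | ⟨rfl | hvR, -⟩
    · exact not_edge_dec_of_mem_reach hvR hvT e
    · exact hvD rfl
    · exact C.asymm e hvR.1

lemma dec_not_mem_family_of_mem_irrelevantAncestors (hvT : v ∈ C.irrelevantAncestors)
    (hvD : v ≠ C.dec) : C.dec ∉ C.family v := by
  rintro (h | e)
  · exact hvD h.symm
  obtain ⟨t, ht | ⟨-, hDt⟩, hvt⟩ := hvT
  · exact C.acyclic _ (.head' e (hvt.trans (DAG.reflTransGen_of_mem_family ht)))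
  · exact hDt (.head e hvt)

lemma pa_subset_ancestors {X : Set V} (hX : C.family C.dec ⊆ X) : C.Pa ⊆ C.ancestors X :=
  fun _ hv => DAG.subset_ancestors (hX (Set.mem_insert_of_mem _ hv))

section Factors

open scoped Classical

variable (C)

noncomputable def relevantUtil : Finset V := C.util.filter (ReflTransGen C.E C.dec ·)

noncomputable def irrelevantUtil : Finset V := C.util.filter (¬ ReflTransGen C.E C.dec ·)

variable {C}

lemma not_mem_reach_of_mem_relevantUtil (hu : u ∈ C.relevantUtil) : u ∉ C.reach := by
  simp only [relevantUtil, Finset.mem_filter] at hu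
  exact not_mem_reach_of_utility hu.1 hu.2

variable [Fintype V] [DecidableEq V] (C)

noncomputable def relevantFactors : Finset V :=
  (Finset.univ.erase C.dec).filter (· ∈ C.relevantAncestors)

noncomputable def reachFactors : Finset V :=
  C.relevantFactors.filter fun v => (C.family v ∩ C.reach).Nonempty

noncomputable def unreachFactors : Finset V :=
  C.relevantFactors.filter fun v => ¬ (C.family v ∩ C.reach).Nonempty

variable {C}

lemma family_subset_of_mem_reachFactors (hv : v ∈ C.reachFactors) :
    v ≠ C.dec ∧ C.family v ⊆ C.reach ∪ C.family C.dec ∧ C.family v ⊆ {C.dec}ᶜ := by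
  simp only [reachFactors, relevantFactors, Finset.mem_filter, Finset.mem_erase] at hv
  have h := family_subset_of_mem_reach hv.1.2 hv.1.1.1 hv.2
  refine ⟨hv.1.1.1, fun w hw => ?_, fun w hw hwD => h.2 (hwD ▸ hw)⟩
  by_cases hwF : w ∈ C.family C.dec
  · exact .inr hwF
  · exact .inl (h.1 ⟨hw, hwF⟩)

lemma family_subset_of_mem_unreachFactors (hv : v ∈ C.unreachFactors) :
    v ≠ C.dec ∧ C.family v ⊆ C.reachᶜ := by
  simp only [unreachFactors, relevantFactors, Finset.mem_filter, Finset.mem_erase] at hv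
  exact ⟨hv.1.1.1, fun w hw hwR => hv.2 ⟨w, hw, hwR⟩⟩

end Factors

end CID
namespace CID.Param

open scoped Classical

variable {V : Type} [Fintype V] [DecidableEq V] {C : CID V} {val : V → Type}
  [∀ v, Fintype (val v)] (P : C.Param val)

lemma dependsOn_cpt {v : V} (hv : v ≠ C.dec) : DependsOn (P.cpt v) (C.family v) :=
  fun a b h => P.cpt_local v hv a b (h v (Set.mem_insert _ _))
    fun u hu => h u (Set.mem_insert_of_mem _ hu)

/-- The conditional distributions of `S` sum to one over the values of `S`; a sink of `S` is
summed out first. -/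
lemma prod_card_mul_sum_prod_cpt : ∀ (S : Finset V), C.dec ∉ S → ∀ b : ∀ v, val v,
    (∏ v ∈ S, (Fintype.card (val v) : ℝ)) *
      ∑ g : ∀ v, val v, ∏ v ∈ S, P.cpt v ((S : Set V).piecewise g b) =
    Fintype.card (∀ v, val v) := by
  intro S
  induction S using Finset.strongInduction with
  | H S ih =>
  intro hD b
  rcases S.eq_empty_or_nonempty with rfl | hS
  · simp
  obtain ⟨v₀, hv₀, hsink⟩ := C.exists_sink (S := (S : Set V)) hS
  rw [Finset.mem_coe] at hv₀
  set S' := S.erase v₀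
  set X : (∀ v, val v) → ∀ v, val v := fun g => (S' : Set V).piecewise g b
  have hS' : C.dec ∉ S' := fun h => hD (Finset.mem_of_mem_erase h)
  have hX : ∀ g, (S : Set V).piecewise g b = Function.update (X g) v₀ (g v₀) := by
    intro g
    ext v
    by_cases hv : v = v₀
    · subst hv; simp [hv₀]
    · by_cases hvS : v ∈ S <;> simp [X, S', hv, hvS]
  have hXupd : ∀ g y, X (Function.update g v₀ y) = X g := by
    intro g y
    ext v
    by_cases hv : v ∈ S'
    · simp [X, hv, Function.update_of_ne (Finset.ne_of_mem_erase hv)]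
    · simp [X, hv]
  have hcpt : ∀ g y, ∀ v ∈ S', P.cpt v (Function.update (X g) v₀ y) = P.cpt v (X g) := by
    intro g y v hv
    refine P.dependsOn_cpt (fun h => hS' (h ▸ hv)) fun u hu => ?_
    refine Function.update_of_ne ?_ _ _
    rintro rfl
    rcases hu with rfl | hu
    · exact Finset.ne_of_mem_erase hv rfl
    · exact hsink v (Finset.mem_of_mem_erase hv) hu
  have hsum : (Fintype.card (val v₀) : ℝ) *
      ∑ g : ∀ v, val v, ∏ v ∈ S, P.cpt v ((S : Set V).piecewise g b) =
      ∑ g, ∏ v ∈ S', P.cpt v (X g) := by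
    rw [← sum_sum_update v₀]
    refine Finset.sum_congr rfl fun g _ => ?_
    simp only [hX, Function.update_self, hXupd]
    simp_rw [← Finset.mul_prod_erase S _ hv₀]
    rw [Finset.sum_congr rfl fun y _ => by rw [Finset.prod_congr rfl (hcpt g y)],
      ← Finset.sum_mul, P.cpt_sum v₀ (fun h => hD (h ▸ hv₀)) (X g), one_mul]
  rw [← Finset.mul_prod_erase S _ hv₀, mul_comm (Fintype.card (val v₀) : ℝ), mul_assoc, hsum]
  exact ih S' (Finset.erase_ssubset hv₀) hS' b

lemma prod_card_mul_sum_mul_prod_cpt (S : Finset V) (hD : C.dec ∉ S) (K : Set V)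
    (hSK : ∀ v ∈ S, v ∉ K) {f : (∀ v, val v) → ℝ} (hf : DependsOn f (S : Set V)ᶜ)
    (x : ∀ v, val v) :
    (∏ v ∈ S, (Fintype.card (val v) : ℝ)) *
      ∑ g, f g * ∏ v ∈ S, P.cpt v (K.piecewise x g) = ∑ g, f g := by
  rcases isEmpty_or_nonempty (∀ v, val v) with hA | hA
  · simp [Finset.univ_eq_empty]
  refine mul_left_cancel₀ (Nat.cast_ne_zero.mpr Fintype.card_ne_zero :
    (Fintype.card (∀ v, val v) : ℝ) ≠ 0) ?_
  rw [mul_left_comm, ← sum_sum_piecewise (S : Set V), Finset.sum_comm, Finset.mul_sum,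
    Finset.mul_sum]
  refine Finset.sum_congr rfl fun g _ => ?_
  rw [← P.prod_card_mul_sum_prod_cpt S hD (K.piecewise x g)]
  simp only [Finset.mul_sum, Finset.sum_mul]
  refine Finset.sum_congr rfl fun h _ => ?_
  have hKS : K.piecewise x ((S : Set V).piecewise h g) =
      (S : Set V).piecewise h (K.piecewise x g) := by
    ext v
    by_cases hvS : v ∈ S
    · simp [hvS, hSK v hvS]
    · by_cases hvK : v ∈ K <;> simp [hvS, hvK]
  rw [hKS, hf fun v hv => Set.piecewise_eq_of_notMem _ _ _ hv]
  ring

noncomputable def weightedUtility (S U : Finset V) (b : ∀ v, val v) : ℝ :=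
  (∏ v ∈ S, P.cpt v b) * ∑ u ∈ U, P.uval u (b u)

/-- The unnormalized expected utility of `U` given the values of `x` on the decision and its
observations. -/
noncomputable def contextUtility (U : Finset V) (x : ∀ v, val v) : ℝ :=
  ∑ g, P.weightedUtility (Finset.univ.erase C.dec) U ((C.family C.dec).piecewise x g)

variable {P}

lemma dependsOn_prod_cpt {S : Finset V} {Y : Set V} (hS : ∀ v ∈ S, v ≠ C.dec ∧ C.family v ⊆ Y) :
    DependsOn (fun b => ∏ v ∈ S, P.cpt v b) Y :=
  dependsOn_finset_prod fun v hv => (P.dependsOn_cpt (hS v hv).1).mono (hS v hv).2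

lemma dependsOn_weightedUtility {S U : Finset V} {Y : Set V}
    (hS : ∀ v ∈ S, v ≠ C.dec ∧ C.family v ⊆ Y) (hU : ∀ u ∈ U, u ∈ Y) :
    DependsOn (P.weightedUtility S U) Y :=
  (dependsOn_prod_cpt hS).mul
    (dependsOn_finset_sum fun u hu _ _ h => by rw [h u (hU u hu)])

lemma contextUtility_eq_add (U : Finset V) (p : V → Prop) (x : ∀ v, val v) :
    P.contextUtility U x =
      P.contextUtility (U.filter p) x + P.contextUtility (U.filter (¬ p ·)) x := by
  simp only [contextUtility, weightedUtility, ← Finset.sum_add_distrib, ← mul_add,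
    Finset.sum_filter_add_sum_filter_not]

lemma card_mul_value {q : (∀ v, val v) → ℝ} (hq : DependsOn q (C.family C.dec)) :
    (Fintype.card (∀ v, val v) : ℝ) * C.value P q = ∑ x, q x * P.contextUtility C.util x := by
  rw [CID.value, ← sum_sum_piecewise (C.family C.dec)]
  refine Finset.sum_congr rfl fun x _ => ?_
  rw [contextUtility, Finset.mul_sum]
  refine Finset.sum_congr rfl fun g _ => ?_
  rw [hq fun i hi => Set.piecewise_eq_of_mem _ _ _ hi, weightedUtility, mul_assoc]

/-- The conditional distributions of the nodes outside the parent-closed set `T` sum out. -/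
lemma prod_card_mul_contextUtility {T : Set V} (hT : ∀ v w, C.E v w → w ∈ T → v ∈ T)
    (hPa : C.Pa ⊆ T) {U : Finset V} (hU : ∀ u ∈ U, u ∈ T) (x : ∀ v, val v) :
    (∏ v ∈ (Finset.univ.erase C.dec).filter (· ∉ T), (Fintype.card (val v) : ℝ)) *
        P.contextUtility U x =
      ∑ g, P.weightedUtility ((Finset.univ.erase C.dec).filter (· ∈ T)) U
        ((C.family C.dec).piecewise x g) := by
  have hsplit : ∀ b, P.weightedUtility (Finset.univ.erase C.dec) U b =
      P.weightedUtility ((Finset.univ.erase C.dec).filter (· ∈ T)) U b *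
        ∏ v ∈ (Finset.univ.erase C.dec).filter (· ∉ T), P.cpt v b := fun b => by
    rw [weightedUtility, weightedUtility, mul_right_comm,
      Finset.prod_filter_mul_prod_filter_not]
  simp_rw [contextUtility, hsplit]
  refine P.prod_card_mul_sum_mul_prod_cpt _ (by simp) _ ?_ ?_ x
  · intro v hv hvF
    simp only [Finset.mem_filter, Finset.mem_erase] at hv
    rcases hvF with rfl | hvPa
    · exact hv.1.1 rfl
    · exact hv.2 (hPa hvPa)
  · refine ((dependsOn_weightedUtility (Y := T) ?_ hU).piecewise_right _ x).mono ?_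
    · intro v hv
      simp only [Finset.mem_filter, Finset.mem_erase] at hv
      refine ⟨hv.1.1, ?_⟩
      rintro w (rfl | e)
      exacts [hv.2, hT w v e hv.2]
    · intro v hv
      simp_all

variable (P)

noncomputable def reachWeight (x : ∀ v, val v) : ℝ :=
  ∑ g, ∏ v ∈ C.reachFactors, P.cpt v ((C.family C.dec).piecewise x g)

noncomputable def requisiteUtility (x : ∀ v, val v) : ℝ :=
  ∑ g, P.weightedUtility C.unreachFactors C.relevantUtil ((C.family C.dec).piecewise x g)

lemma reachWeight_nonneg (x : ∀ v, val v) : 0 ≤ P.reachWeight x :=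
  Finset.sum_nonneg fun _ _ => Finset.prod_nonneg fun v _ => P.cpt_nonneg v _

lemma dependsOn_reachWeight : DependsOn P.reachWeight {C.dec}ᶜ :=
  dependsOn_finset_sum fun g _ =>
    (((dependsOn_prod_cpt fun _ hv =>
      ⟨(family_subset_of_mem_reachFactors hv).1,
        (family_subset_of_mem_reachFactors hv).2.2⟩).piecewise_left _ g).mono
      Set.inter_subset_left)

lemma dependsOn_requisiteUtility : DependsOn P.requisiteUtility C.requisiteFamily :=
  dependsOn_finset_sum fun g _ =>
    (((dependsOn_weightedUtility (Y := C.reachᶜ) (fun _ => family_subset_of_mem_unreachFactors)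
      fun _ hu => not_mem_reach_of_mem_relevantUtil hu).piecewise_left _ g).mono
      fun _ hv => mem_requisiteFamily_of_not_mem_reach hv.2 hv.1)

/-- Conditionally on the context, the variables read by `reachFactors` and the remaining
ones are independent. -/
lemma card_mul_contextUtility_relevantUtil (x : ∀ v, val v) :
    (Fintype.card (∀ v, val v) : ℝ) *
      ((∏ v ∈ (Finset.univ.erase C.dec).filter (· ∉ C.relevantAncestors),
        (Fintype.card (val v) : ℝ)) * P.contextUtility C.relevantUtil x) =
    P.reachWeight x * P.requisiteUtility x := by
  have hA : DependsOn (fun g => ∏ v ∈ C.reachFactors, P.cpt v ((C.family C.dec).piecewise x g))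
      C.reach := by
    refine ((dependsOn_prod_cpt fun _ hv =>
      ⟨(family_subset_of_mem_reachFactors hv).1,
        (family_subset_of_mem_reachFactors hv).2.1⟩).piecewise_right _ x).mono ?_
    rintro v ⟨hv | hv, hvF⟩
    exacts [hv, absurd hv hvF]
  have hB : DependsOn (fun g => P.weightedUtility C.unreachFactors C.relevantUtil
      ((C.family C.dec).piecewise x g)) C.reachᶜ :=
    ((dependsOn_weightedUtility (Y := C.reachᶜ)
      (fun _ => family_subset_of_mem_unreachFactors)
      fun _ hu => not_mem_reach_of_mem_relevantUtil hu).piecewise_right _ x).mono Set.sdiff_subset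
  rw [prod_card_mul_contextUtility (T := C.relevantAncestors)
    (fun _ _ => DAG.mem_ancestors_of_edge) (pa_subset_ancestors Set.subset_union_left)
    (fun u hu => DAG.subset_ancestors (.inr (by simpa [relevantUtil] using hu))),
    reachWeight, requisiteUtility, sum_mul_sum_of_dependsOn hA hB]
  refine congrArg _ (Finset.sum_congr rfl fun g _ => ?_)
  rw [weightedUtility, weightedUtility, ← mul_assoc, reachFactors, unreachFactors,
    Finset.prod_filter_mul_prod_filter_not, relevantFactors]

lemma dependsOn_contextUtility_irrelevantUtil :
    DependsOn (P.contextUtility C.irrelevantUtil) {C.dec}ᶜ := by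
  intro x y hxy
  refine mul_left_cancel₀
    (prod_card_ne_zero x ((Finset.univ.erase C.dec).filter (· ∉ C.irrelevantAncestors))) ?_
  have hT := prod_card_mul_contextUtility (P := P) (T := C.irrelevantAncestors)
    (U := C.irrelevantUtil)
    (fun _ _ => DAG.mem_ancestors_of_edge) (pa_subset_ancestors Set.subset_union_left)
    (fun u hu => DAG.subset_ancestors (.inr (by simpa [irrelevantUtil] using hu)))
  rw [hT x, hT y]
  refine Finset.sum_congr rfl fun g _ => ?_
  refine (((dependsOn_weightedUtility (Y := {C.dec}ᶜ) (fun v hv => ?_) fun u hu hu' => ?_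
    ).piecewise_left _ g).mono Set.inter_subset_left) hxy
  · simp only [Finset.mem_filter, Finset.mem_erase] at hv
    exact ⟨hv.1.1, fun w hw hwD =>
      dec_not_mem_family_of_mem_irrelevantAncestors hv.2 hv.1.1 (hwD ▸ hw)⟩
  · exact C.dec_not_util (hu' ▸ (Finset.mem_filter.mp hu).1)

theorem exists_contextUtility_eq : ∃ W Q I : (∀ v, val v) → ℝ, (∀ x, 0 ≤ W x) ∧
    DependsOn W {C.dec}ᶜ ∧ DependsOn Q C.requisiteFamily ∧ DependsOn I {C.dec}ᶜ ∧
    ∀ x, P.contextUtility C.util x = W x * Q x + I x := by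
  set c : ℝ := Fintype.card (∀ v, val v) *
    ∏ v ∈ (Finset.univ.erase C.dec).filter (· ∉ C.relevantAncestors), (Fintype.card (val v) : ℝ)
  refine ⟨fun x => c⁻¹ * P.reachWeight x, P.requisiteUtility,
    P.contextUtility C.irrelevantUtil, fun x => mul_nonneg (by positivity) (P.reachWeight_nonneg x),
    fun x y h => by simp only [P.dependsOn_reachWeight h], P.dependsOn_requisiteUtility,
    P.dependsOn_contextUtility_irrelevantUtil, fun x => ?_⟩
  have hc : c ≠ 0 := mul_ne_zero (card_pi_ne_zero x) (prod_card_ne_zero x _)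
  rw [P.contextUtility_eq_add C.util (ReflTransGen C.E C.dec ·)]
  congr 1
  rw [mul_assoc, ← card_mul_contextUtility_relevantUtil, ← mul_assoc _ _ (P.contextUtility _ x),
    inv_mul_cancel_left₀ hc]
  rfl

end CID.Param

namespace CID.Pol

variable {V : Type} [Fintype V] [DecidableEq V] {C : CID V} {val : V → Type}
  [∀ v, Fintype (val v)] {Obs : Set V}

lemma dependsOn (π : C.Pol val Obs) : DependsOn π.p (insert C.dec Obs) :=
  fun a b h => π.depends a b (h _ (Set.mem_insert _ _)) fun u hu => h u (Set.mem_insert_of_mem _ hu)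

lemma p_le_one (π : C.Pol val Obs) (a : ∀ v, val v) : π.p a ≤ 1 := by
  rw [← π.sum a, ← Function.update_eq_self C.dec a]
  simpa using Finset.single_le_sum (fun d _ => π.nonneg (Function.update a C.dec d))
    (Finset.mem_univ (a C.dec))

def ofSubset {Obs' : Set V} (h : Obs ⊆ Obs') (π : C.Pol val Obs) : C.Pol val Obs' where
  p := π.p
  nonneg := π.nonneg
  depends a b hD hObs := π.depends a b hD fun u hu => hObs u (h hu)
  sum := π.sum

section Greedy

open scoped Classical

noncomputable def greedy (Q : (∀ v, val v) → ℝ) (hQ : DependsOn Q (insert C.dec Obs)) :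
    C.Pol val Obs where
  p x := if x C.dec = argmaxUpdate C.dec Q x then 1 else 0
  nonneg x := by split_ifs <;> norm_num
  depends x y hD hObs := by
    rw [hD, argmaxUpdate_congr fun d => hQ fun i hi => ?_]
    by_cases hiD : i = C.dec
    · subst hiD; simp
    · simp [hiD, hObs i ((Set.mem_insert_iff.mp hi).resolve_left hiD)]
  sum x := by
    simp [argmaxUpdate_update]

lemma greedy_p_update (Q : (∀ v, val v) → ℝ) (hQ : DependsOn Q (insert C.dec Obs))
    (x : ∀ v, val v) (d : val C.dec) :
    (greedy Q hQ).p (Function.update x C.dec d) =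
      if d = argmaxUpdate C.dec Q x then 1 else 0 := by
  simp [greedy, argmaxUpdate_update]

lemma sum_mul_le_sum_greedy_mul {Obs' : Set V} (π : C.Pol val Obs') {Q : (∀ v, val v) → ℝ}
    (hQ : DependsOn Q (insert C.dec Obs)) {Φ : (∀ v, val v) → ℝ} {x : ∀ v, val v} {w c : ℝ}
    (hw : 0 ≤ w) (hΦ : ∀ d, Φ (Function.update x C.dec d) = w * Q (Function.update x C.dec d) + c) :
    ∑ d, π.p (Function.update x C.dec d) * Φ (Function.update x C.dec d) ≤
      ∑ d, (greedy Q hQ).p (Function.update x C.dec d) * Φ (Function.update x C.dec d) := by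
  set d₀ := argmaxUpdate C.dec Q x
  have hle : ∀ d, Φ (Function.update x C.dec d) ≤ Φ (Function.update x C.dec d₀) := fun d => by
    rw [hΦ, hΦ]
    gcongr
    exact le_argmaxUpdate C.dec Q x d
  calc ∑ d, π.p (Function.update x C.dec d) * Φ (Function.update x C.dec d)
      ≤ ∑ d, π.p (Function.update x C.dec d) * Φ (Function.update x C.dec d₀) :=
        Finset.sum_le_sum fun d _ => mul_le_mul_of_nonneg_left (hle d) (π.nonneg _)
    _ = ∑ d, (greedy Q hQ).p (Function.update x C.dec d) * Φ (Function.update x C.dec d) := by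
        simp [← Finset.sum_mul, π.sum, greedy_p_update, d₀]

end Greedy

end CID.Pol

namespace CID.Param

variable {V : Type} [Fintype V] [DecidableEq V] {C : CID V} {val : V → Type}
  [∀ v, Fintype (val v)] (P : C.Param val)

lemma value_le {Obs : Set V} (π : C.Pol val Obs) :
    C.value P π.p ≤ ∑ a, (∏ v ∈ Finset.univ.erase C.dec, P.cpt v a) *
      |∑ u ∈ C.util, P.uval u (a u)| := by
  refine Finset.sum_le_sum fun a _ => ?_
  have hprod : 0 ≤ ∏ v ∈ Finset.univ.erase C.dec, P.cpt v a :=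
    Finset.prod_nonneg fun v _ => P.cpt_nonneg v a
  calc _ ≤ π.p a * ((∏ v ∈ Finset.univ.erase C.dec, P.cpt v a) *
        |∑ u ∈ C.util, P.uval u (a u)|) := by
        rw [← mul_assoc]
        exact mul_le_mul_of_nonneg_left (le_abs_self _) (mul_nonneg (π.nonneg a) hprod)
    _ ≤ _ := mul_le_of_le_one_left (mul_nonneg hprod (abs_nonneg _)) (π.p_le_one a)

lemma bddAbove_range_value (Obs : Set V) :
    BddAbove (Set.range fun π : C.Pol val Obs => C.value P π.p) :=
  ⟨_, Set.forall_mem_range.mpr P.value_le⟩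

theorem exists_value_le (π : C.Pol val C.Pa) :
    ∃ π' : C.Pol val {O | C.Requisite O}, C.value P π.p ≤ C.value P π'.p := by
  obtain ⟨W, Q, I, hW0, hW, hQ, hI, hΦ⟩ := P.exists_contextUtility_eq
  refine ⟨Pol.greedy Q hQ, ?_⟩
  rcases isEmpty_or_nonempty (∀ v, val v) with hA | ⟨⟨x₀⟩⟩
  · simp [CID.value, Finset.univ_eq_empty]
  have key : ∀ {Obs : Set V} (q : C.Pol val Obs), Obs ⊆ C.Pa →
      (Fintype.card (val C.dec) : ℝ) * (Fintype.card (∀ v, val v) * C.value P q.p) =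
        ∑ x, ∑ d, q.p (Function.update x C.dec d) *
          P.contextUtility C.util (Function.update x C.dec d) := fun q h => by
    rw [card_mul_value (q.dependsOn.mono (Set.insert_subset_insert h)),
      sum_sum_update C.dec fun x => q.p x * P.contextUtility C.util x]
  refine le_of_mul_le_mul_left ?_ (mul_pos (Nat.cast_pos.mpr (@Fintype.card_pos _ _ ⟨x₀ C.dec⟩))
    (Nat.cast_pos.mpr (@Fintype.card_pos _ _ ⟨x₀⟩)) : (0 : ℝ) < _)
  rw [mul_assoc, mul_assoc, key π le_rfl, key _ fun _ h => h.1]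
  refine Finset.sum_le_sum fun x _ =>
    Pol.sum_mul_le_sum_greedy_mul π hQ (c := I x) (hW0 x) fun d => ?_
  rw [hΦ, hW fun i hi => Function.update_of_ne hi _ _, hI fun i hi => Function.update_of_ne hi _ _]

end CID.Param

/-- Removing all nonrequisite information links yields a reduced graph in which, for any
parameterization, the optimal value equals the optimal value in the original graph:
the supremum of the value over policies that depend only on the requisite observations
equals the supremum over policies depending on all of `Pa_D`. -/
theorem stmt8 {V : Type} [Fintype V] [DecidableEq V] (C : CID V) (val : V → Type)
    [∀ v, Fintype (val v)] (P : C.Param val) :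
    (⨆ π : C.Pol val {O | C.Requisite O}, C.value P π.p) =
      ⨆ π : C.Pol val C.Pa, C.value P π.p := by
  have : Nonempty (C.Pol val {O | C.Requisite O}) := ⟨.greedy (fun _ => 0) fun _ _ _ => rfl⟩
  have : Nonempty (C.Pol val C.Pa) := ⟨.greedy (fun _ => 0) fun _ _ _ => rfl⟩
  exact le_antisymm
    (ciSup_mono_of_forall_exists (P.bddAbove_range_value _) fun π =>
      ⟨π.ofSubset fun _ h => h.1, le_rfl⟩)
    (ciSup_mono_of_forall_exists (P.bddAbove_range_value _) P.exists_value_le)
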